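/- The regular spanners are closed under intersection: for all regular spanners P1 and P2, the spanner P1 ∩ P2 defined by (P1 ∩ P2)(d) = P1(d) ∩ P2(d) for every document d is a regular spanner. -/

import Mathlib

/-!
Product construction. For valid ref-words, having the same letters and the same mapping means
that each block of markers between two consecutive letters of one is a permutation of the
corresponding block of the other. The product automaton follows `A₁` on the ref-word and, within a
block, guesses for each marker a transition of `A₂` reading it; at the next letter the guessed
transitions must form a trail from the state in which `A₂` entered the block, so that `A₂` reads
the same block in its own order. Storing the trail as a set of edges of `A₂` keeps the state space
finite, and loses nothing: within a marker block an accepting run of a sequential automaton never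
repeats a state, since pumping the loop would repeat a marker.
-/

namespace DocSpanners

/-- A span: a pair of endpoint positions `[i, j⟩`. -/
abbrev Span : Type := ℕ × ℕ

/-- `s` is a span of document `d`. -/
def IsSpanOf {α : Type} (d : List α) (s : Span) : Prop :=
  s.1 ≤ s.2 ∧ s.2 ≤ d.length

/-- A (schemaless) mapping over variable type `V`: a partial assignment of spans. -/
abbrev Mapping (V : Type) : Type := V → Option Span

/-- `m` is a mapping of document `d`. -/
def MappingOf {α V : Type} (d : List α) (m : Mapping V) : Prop :=
  ∀ x s, m x = some s → IsSpanOf d s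

/-- A spanner: maps documents to sets of mappings. -/
abbrev Spanner (α V : Type) : Type := List α → Set (Mapping V)

/-- Labels of a variable-set automaton: letters and variable markers. -/
inductive Label (α V : Type) : Type where
  | letter (a : α)
  | vopen (x : V)
  | vclose (x : V)
deriving DecidableEq

/-- The sequence of letters of a ref-word. -/
def letters {α V : Type} (w : List (Label α V)) : List α :=
  w.filterMap fun l => match l with
    | Label.letter a => some a
    | _ => none

/-- A ref-word is valid if for each variable, either its markers do not appear, or
the opening and closing markers appear exactly once with the opening first. -/
def ValidRef {α V : Type} [DecidableEq α] [DecidableEq V] (w : List (Label α V)) : Prop :=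
  ∀ x : V,
    (Label.vopen x ∉ w ∧ Label.vclose x ∉ w) ∨
    (w.count (Label.vopen x) = 1 ∧ w.count (Label.vclose x) = 1 ∧
      w.idxOf (Label.vopen x) < w.idxOf (Label.vclose x))

/-- The mapping defined by a (valid) ref-word: each marked variable is sent to the
span delimited by the positions at which its markers are read. -/
def refMapping {α V : Type} [DecidableEq α] [DecidableEq V] (w : List (Label α V)) :
    Mapping V := fun x =>
  if Label.vopen x ∈ w then
    some ((letters (w.take (w.idxOf (Label.vopen x)))).length,
          (letters (w.take (w.idxOf (Label.vclose x)))).length)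
  else none

/-- A variable-set automaton with state type `Q`. -/
structure VA (α V Q : Type) : Type where
  init : Q
  final : Set Q
  trans : Q → Label α V → Q → Prop

/-- Paths in a VA. -/
inductive VA.Path {α V Q : Type} (A : VA α V Q) : Q → List (Label α V) → Q → Prop where
  | nil (q : Q) : VA.Path A q [] q
  | cons {q q' q'' : Q} {l : Label α V} {w : List (Label α V)} :
      A.trans q l q' → VA.Path A q' w q'' → VA.Path A q (l :: w) q''

/-- The VA accepts the ref-word `w` (an accepting run reads `w`). -/
def VA.AcceptsRef {α V Q : Type} (A : VA α V Q) (w : List (Label α V)) : Prop :=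
  ∃ qf ∈ A.final, A.Path A.init w qf

/-- A VA is sequential if every accepting run is valid. -/
def VA.Sequential {α V Q : Type} [DecidableEq α] [DecidableEq V] (A : VA α V Q) : Prop :=
  ∀ w, A.AcceptsRef w → ValidRef w

/-- The spanner defined by a (sequential) VA. -/
def VA.spanner {α V Q : Type} [DecidableEq α] [DecidableEq V] (A : VA α V Q) :
    Spanner α V := fun d =>
  {m | ∃ w, A.AcceptsRef w ∧ letters w = d ∧ refMapping w = m}

/-- A spanner is regular if it is defined by some sequential VA with finitely many states. -/
def IsRegular {α V : Type} [DecidableEq α] [DecidableEq V] (P : Spanner α V) : Prop :=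
  ∃ (Q : Type) (_ : Fintype Q) (A : VA α V Q), A.Sequential ∧ A.spanner = P

/-- The skyline operator: keep only the mappings of `P d` that are maximal under `R d`. -/
def skyline {α V : Type} (P : Spanner α V)
    (R : List α → Mapping V → Mapping V → Prop) : Spanner α V := fun d =>
  {m | m ∈ P d ∧ ∀ m' ∈ P d, m' ≠ m → ¬ R d m m'}

/-- The variable inclusion domination relation: `m2` extends `m1`. -/
def varIncRel {V : Type} (m1 m2 : Mapping V) : Prop :=
  ∀ x s, m1 x = some s → m2 x = some s

/-- Two mappings have the same domain. -/
def sameDom {V : Type} (m1 m2 : Mapping V) : Prop :=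
  ∀ x, m1 x = none ↔ m2 x = none

/-- The span inclusion domination relation. -/
def spanIncRel {V : Type} (m1 m2 : Mapping V) : Prop :=
  sameDom m1 m2 ∧
    ∀ x s1 s2, m1 x = some s1 → m2 x = some s2 → s2.1 ≤ s1.1 ∧ s1.2 ≤ s2.2

/-- The left-to-right domination relation: same start, `m2` no shorter. -/
def ltrRel {V : Type} (m1 m2 : Mapping V) : Prop :=
  sameDom m1 m2 ∧
    ∀ x s1 s2, m1 x = some s1 → m2 x = some s2 →
      s1.1 = s2.1 ∧ s1.2 - s1.1 ≤ s2.2 - s2.1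

/-- The span length domination relation: `m2`'s spans are no shorter. -/
def spanLenRel {V : Type} (m1 m2 : Mapping V) : Prop :=
  sameDom m1 m2 ∧
    ∀ x s1 s2, m1 x = some s1 → m2 x = some s2 → s1.2 - s1.1 ≤ s2.2 - s2.1

section Intersection

variable {α V Q Q₁ Q₂ : Type}

lemma _root_.Multiset.exists_list_of_map_eq_coe {β γ : Type} {f : β → γ} {M : Multiset β}
    {E : List γ} (h : M.map f = E) : ∃ T : List β, (T : Multiset β) = M ∧ T.map f = E := by
  classical
  induction E generalizing M with
  | nil => exact ⟨[], (Multiset.map_eq_zero.1 h).symm, rfl⟩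
  | cons e E ih =>
    obtain ⟨p, hp, rfl⟩ := Multiset.mem_map.1 (h ▸ Multiset.mem_coe.2 (List.mem_cons_self ..))
    have hM := Multiset.cons_erase hp
    rw [← hM, Multiset.map_cons, ← Multiset.cons_coe] at h
    obtain ⟨T, hT, hTE⟩ := ih (Multiset.cons_inj_right _ |>.1 h)
    exact ⟨p :: T, by rw [← Multiset.cons_coe, hT, hM], by simp [hTE]⟩

namespace Label

def IsMarker : Label α V → Prop
  | letter _ => False
  | _ => True

@[simp] lemma not_isMarker_letter (a : α) : ¬ (letter a : Label α V).IsMarker := id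
@[simp] lemma isMarker_vopen (x : V) : (vopen x : Label α V).IsMarker := trivial
@[simp] lemma isMarker_vclose (x : V) : (vclose x : Label α V).IsMarker := trivial

end Label

open Label

@[simp] lemma letters_nil : letters ([] : List (Label α V)) = [] := rfl

@[simp] lemma letters_letter_cons (a : α) (w : List (Label α V)) :
    letters (letter a :: w) = a :: letters w := rfl

lemma letters_cons_of_isMarker {l : Label α V} (hl : l.IsMarker) (w : List (Label α V)) :
    letters (l :: w) = letters w := by
  cases l
  exacts [absurd hl id, rfl, rfl]

@[simp] lemma letters_append (u w : List (Label α V)) :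
    letters (u ++ w) = letters u ++ letters w :=
  List.filterMap_append

lemma letters_eq_nil_iff {w : List (Label α V)} : letters w = [] ↔ ∀ l ∈ w, l.IsMarker := by
  refine List.filterMap_eq_nil_iff.trans (forall₂_congr fun l _ => ?_)
  cases l <;> simp [Label.IsMarker]

lemma forall_isMarker_or_eq_append_letter (w : List (Label α V)) :
    (∀ l ∈ w, l.IsMarker) ∨ ∃ m a u, (∀ l ∈ m, l.IsMarker) ∧ w = m ++ letter a :: u := by
  induction w with
  | nil => simp
  | cons l w ih =>
    cases l with
    | letter a => exact .inr ⟨[], a, w, by simp, rfl⟩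
    | vopen x | vclose x =>
      rcases ih with h | ⟨m, a, u, hm, rfl⟩
      · exact .inl (by simpa using h)
      · exact .inr ⟨_ :: m, a, u, by simpa using hm, rfl⟩

theorem induction_on_blocks {motive : List (Label α V) → Prop}
    (markers : ∀ m, (∀ l ∈ m, l.IsMarker) → motive m)
    (letter : ∀ m a u, (∀ l ∈ m, l.IsMarker) → motive u → motive (m ++ letter a :: u))
    (w : List (Label α V)) : motive w := by
  induction hn : w.length using Nat.strong_induction_on generalizing w with
  | _ n ih =>
    rcases forall_isMarker_or_eq_append_letter w with h | ⟨m, a, u, hm, rfl⟩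
    · exact markers w h
    · exact letter m a u hm (ih u.length (by simp [← hn]; omega) u rfl)

inductive BlockPerm : List (Label α V) → List (Label α V) → Prop
  | markers {m m'} : (∀ l ∈ m, l.IsMarker) → m.Perm m' → BlockPerm m m'
  | letter {m m' u u'} (a : α) : (∀ l ∈ m, l.IsMarker) → m.Perm m' → BlockPerm u u' →
      BlockPerm (m ++ letter a :: u) (m' ++ letter a :: u')

lemma BlockPerm.letters_eq {w w' : List (Label α V)} (h : BlockPerm w w') :
    letters w = letters w' := by
  induction h with
  | markers hm hperm =>
    rw [letters_eq_nil_iff.2 hm, letters_eq_nil_iff.2 fun l hl => hm l (hperm.mem_iff.2 hl)]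
  | letter a hm hperm _ ih =>
    simp [letters_eq_nil_iff.2 hm, letters_eq_nil_iff.2 fun l hl => hm l (hperm.mem_iff.2 hl), ih]

section Decidable

variable [DecidableEq α] [DecidableEq V]

/-- The number of letters before the first occurrence of the marker `l` in `w` (letters of `w`
are never compared with `l`). -/
def firstGap : List (Label α V) → Label α V → Option ℕ
  | [], _ => none
  | letter _ :: w, l => (firstGap w l).map Nat.succ
  | vopen x :: w, l => if vopen x = l then some 0 else firstGap w l
  | vclose x :: w, l => if vclose x = l then some 0 else firstGap w l

@[simp] lemma firstGap_nil (l : Label α V) : firstGap [] l = none := rfl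

@[simp] lemma firstGap_letter_cons (a : α) (w : List (Label α V)) (l : Label α V) :
    firstGap (letter a :: w) l = (firstGap w l).map Nat.succ := rfl

lemma firstGap_cons_of_isMarker {m : Label α V} (hm : m.IsMarker) (w : List (Label α V))
    (l : Label α V) : firstGap (m :: w) l = if m = l then some 0 else firstGap w l := by
  cases m
  exacts [absurd hm id, rfl, rfl]

lemma firstGap_append_of_forall_isMarker {m : List (Label α V)} (hm : ∀ l ∈ m, l.IsMarker)
    (w : List (Label α V)) (l : Label α V) :
    firstGap (m ++ w) l = if l ∈ m then some 0 else firstGap w l := by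
  induction m with
  | nil => simp
  | cons k m ih =>
    simp only [List.forall_mem_cons] at hm
    rw [List.cons_append, firstGap_cons_of_isMarker hm.1, ih hm.2]
    by_cases hk : k = l
    · simp [hk]
    · simp [hk, Ne.symm hk]

lemma firstGap_of_forall_isMarker {m : List (Label α V)} (hm : ∀ l ∈ m, l.IsMarker)
    (l : Label α V) : firstGap m l = if l ∈ m then some 0 else none := by
  simpa using firstGap_append_of_forall_isMarker hm [] l

lemma firstGap_eq_ite {l : Label α V} (hl : l.IsMarker) (w : List (Label α V)) :
    firstGap w l = if l ∈ w then some (letters (w.take (w.idxOf l))).length else none := by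
  induction w with
  | nil => simp
  | cons k w ih =>
    by_cases hk : k.IsMarker
    · rw [firstGap_cons_of_isMarker hk]
      by_cases hkl : k = l
      · subst hkl; simp
      · by_cases hw : l ∈ w <;>
          simp [ih, hw, hkl, Ne.symm hkl, List.idxOf_cons_ne _ hkl, letters_cons_of_isMarker hk]
    · obtain ⟨a, rfl⟩ : ∃ a, k = letter a := by cases k <;> simp_all
      have hne : letter a ≠ l := by rintro rfl; exact hl
      by_cases hw : l ∈ w <;> simp [ih, hw, hne.symm, List.idxOf_cons_ne _ hne]

lemma firstGap_eq_none_iff {l : Label α V} (hl : l.IsMarker) {w : List (Label α V)} :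
    firstGap w l = none ↔ l ∉ w := by
  rw [firstGap_eq_ite hl]
  simp

lemma refMapping_eq_firstGap (w : List (Label α V)) (x : V) :
    refMapping w x = (firstGap w (vopen x)).map
      fun i => (i, (firstGap w (vclose x)).getD (letters w).length) := by
  rw [refMapping, firstGap_eq_ite (by simp), firstGap_eq_ite (by simp)]
  by_cases ho : vopen x ∈ w
  · by_cases hc : vclose x ∈ w <;> simp [ho, hc]
  · simp [ho]

lemma BlockPerm.firstGap_eq {w w' : List (Label α V)} (h : BlockPerm w w')
    (l : Label α V) : firstGap w l = firstGap w' l := by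
  induction h with
  | markers hm hperm =>
    rw [firstGap_of_forall_isMarker hm, firstGap_of_forall_isMarker
      (fun k hk => hm k (hperm.mem_iff.2 hk))]
    simp only [hperm.mem_iff]
  | letter a hm hperm _ ih =>
    rw [firstGap_append_of_forall_isMarker hm, firstGap_append_of_forall_isMarker
      (fun k hk => hm k (hperm.mem_iff.2 hk)), firstGap_letter_cons, firstGap_letter_cons, ih]
    simp only [hperm.mem_iff]

lemma BlockPerm.refMapping_eq {w w' : List (Label α V)} (h : BlockPerm w w') :
    refMapping w = refMapping w' := by
  funext x
  rw [refMapping_eq_firstGap, refMapping_eq_firstGap, h.firstGap_eq, h.firstGap_eq, h.letters_eq]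

def MarkersNodup (w : List (Label α V)) : Prop :=
  ∀ l, l.IsMarker → w.count l ≤ 1

lemma MarkersNodup.sublist {u w : List (Label α V)} (h : MarkersNodup w) (hs : u.Sublist w) :
    MarkersNodup u :=
  fun l hl => (hs.count_le l).trans (h l hl)

lemma MarkersNodup.not_mem_of_mem {l : Label α V} {m u : List (Label α V)} {a : α}
    (h : MarkersNodup (m ++ letter a :: u)) (hl : l.IsMarker) (hm : l ∈ m) : l ∉ u := by
  intro hu
  have := h l hl
  have := List.count_pos_iff.2 hm
  have := List.count_pos_iff.2 hu
  simp only [List.count_append, List.count_cons] at *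
  omega

lemma perm_of_forall_isMarker {m m' : List (Label α V)} (hm : ∀ l ∈ m, l.IsMarker)
    (hm' : ∀ l ∈ m', l.IsMarker) (hc : MarkersNodup m) (hc' : MarkersNodup m')
    (hmem : ∀ l, l.IsMarker → (l ∈ m ↔ l ∈ m')) : m.Perm m' := by
  have nodup {m : List (Label α V)} (hm : ∀ l ∈ m, l.IsMarker) (hc : MarkersNodup m) : m.Nodup :=
    List.nodup_iff_count_le_one.2 fun l => by
      by_cases hl : l.IsMarker
      · exact hc l hl
      · simp [List.count_eq_zero_of_not_mem (mt (hm l) hl)]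
  refine (List.perm_ext_iff_of_nodup (nodup hm hc) (nodup hm' hc')).2 fun l => ?_
  by_cases hl : l.IsMarker
  · exact hmem l hl
  · exact iff_of_false (mt (hm l) hl) (mt (hm' l) hl)

lemma blockPerm_of_firstGap_eq {w w' : List (Label α V)} (hw : MarkersNodup w)
    (hw' : MarkersNodup w') (hlet : letters w = letters w')
    (hgap : ∀ l, l.IsMarker → firstGap w l = firstGap w' l) : BlockPerm w w' := by
  induction w using induction_on_blocks generalizing w' with
  | markers m hm =>
    have hm' : ∀ l ∈ w', l.IsMarker := letters_eq_nil_iff.1 (hlet ▸ letters_eq_nil_iff.2 hm)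
    refine .markers hm (perm_of_forall_isMarker hm hm' hw hw' fun l hl => ?_)
    have := hgap l hl
    rw [firstGap_of_forall_isMarker hm, firstGap_of_forall_isMarker hm'] at this
    by_cases h : l ∈ m <;> by_cases h' : l ∈ w' <;> simp_all
  | letter m a u hm ih =>
    rcases forall_isMarker_or_eq_append_letter w' with hm' | ⟨m', b, u', hm', rfl⟩
    · simp [letters_eq_nil_iff.2 hm, letters_eq_nil_iff.2 hm'] at hlet
    simp only [letters_append, letters_eq_nil_iff.2 hm, letters_eq_nil_iff.2 hm',
      letters_letter_cons, List.nil_append, List.cons.injEq] at hlet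
    obtain ⟨rfl, hlet⟩ := hlet
    have key : ∀ l, l.IsMarker → (l ∈ m ↔ l ∈ m') ∧ firstGap u l = firstGap u' l := by
      intro l hl
      have := hgap l hl
      rw [firstGap_append_of_forall_isMarker hm, firstGap_append_of_forall_isMarker hm'] at this
      by_cases h : l ∈ m <;> by_cases h' : l ∈ m' <;> simp [h, h'] at this ⊢
      · rw [(firstGap_eq_none_iff hl).2 (hw.not_mem_of_mem hl h),
          (firstGap_eq_none_iff hl).2 (hw'.not_mem_of_mem hl h')]
      · exact Option.map_injective Nat.succ_injective this
    have hsub {m u : List (Label α V)} : u.Sublist (m ++ letter a :: u) :=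
      (List.sublist_cons_self _ _).trans (List.sublist_append_right _ _)
    refine .letter a hm (perm_of_forall_isMarker hm hm' (hw.sublist (List.sublist_append_left _ _))
      (hw'.sublist (List.sublist_append_left _ _)) fun l hl => (key l hl).1) ?_
    exact ih (hw.sublist hsub) (hw'.sublist hsub) hlet fun l hl => (key l hl).2

lemma ValidRef.markersNodup {w : List (Label α V)} (h : ValidRef w) : MarkersNodup w := by
  intro l hl
  cases l with
  | letter a => exact absurd hl id
  | vopen x | vclose x =>
    rcases h x with ⟨ho, hc⟩ | ⟨ho, hc, -⟩ <;> simp [List.count_eq_zero_of_not_mem, *]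

lemma ValidRef.vclose_mem_iff {w : List (Label α V)} (h : ValidRef w) (x : V) :
    vclose x ∈ w ↔ vopen x ∈ w := by
  rcases h x with ⟨ho, hc⟩ | ⟨ho, hc, -⟩
  · simp [ho, hc]
  · simp [← List.count_pos_iff, ho, hc]

lemma firstGap_vopen_eq (w : List (Label α V)) (x : V) :
    firstGap w (vopen x) = (refMapping w x).map Prod.fst := by
  simp [refMapping_eq_firstGap, Option.map_map, Function.comp_def]

lemma ValidRef.firstGap_vclose_eq {w : List (Label α V)} (h : ValidRef w) (x : V) :
    firstGap w (vclose x) = (refMapping w x).map Prod.snd := by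
  rw [refMapping_eq_firstGap, firstGap_eq_ite (l := vopen x) (by simp),
    firstGap_eq_ite (l := vclose x) (by simp)]
  by_cases ho : vopen x ∈ w <;> simp [ho, h.vclose_mem_iff x]

lemma blockPerm_of_refMapping_eq {w w' : List (Label α V)} (hw : ValidRef w) (hw' : ValidRef w')
    (hlet : letters w = letters w') (hmap : refMapping w = refMapping w') : BlockPerm w w' :=
  blockPerm_of_firstGap_eq hw.markersNodup hw'.markersNodup hlet fun l hl => by
    cases l with
    | letter a => exact absurd hl id
    | vopen x => rw [firstGap_vopen_eq, firstGap_vopen_eq, hmap]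
    | vclose x => rw [hw.firstGap_vclose_eq, hw'.firstGap_vclose_eq, hmap]

end Decidable

namespace VA

variable {A : VA α V Q}

lemma path_nil_iff {q r : Q} : A.Path q [] r ↔ q = r :=
  ⟨fun h => by cases h; rfl, fun h => h ▸ .nil q⟩

lemma path_cons_iff {q r : Q} {l : Label α V} {w : List (Label α V)} :
    A.Path q (l :: w) r ↔ ∃ s, A.trans q l s ∧ A.Path s w r :=
  ⟨fun h => by cases h with | cons ht hp => exact ⟨_, ht, hp⟩, fun ⟨_, ht, hp⟩ => .cons ht hp⟩

lemma path_append_iff {q r : Q} {u w : List (Label α V)} :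
    A.Path q (u ++ w) r ↔ ∃ s, A.Path q u s ∧ A.Path s w r := by
  induction u generalizing q with
  | nil => simp [path_nil_iff]
  | cons l u ih =>
    simp only [List.cons_append, path_cons_iff, ih]
    exact ⟨fun ⟨s, ht, t, hu, hw⟩ => ⟨t, ⟨s, ht, hu⟩, hw⟩,
      fun ⟨t, ⟨s, ht, hu⟩, hw⟩ => ⟨s, ht, t, hu, hw⟩⟩

lemma Path.append {q s r : Q} {u w : List (Label α V)} (hu : A.Path q u s) (hw : A.Path s w r) :
    A.Path q (u ++ w) r :=
  path_append_iff.2 ⟨s, hu, hw⟩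

/-- Pumping a marker loop of an accepting run would repeat a marker. -/
lemma Sequential.eq_nil_of_loop [DecidableEq α] [DecidableEq V] (hA : A.Sequential)
    {s f : Q} {x y z : List (Label α V)} (hx : A.Path A.init x s) (hy : A.Path s y s)
    (hz : A.Path s z f) (hf : f ∈ A.final) (hm : ∀ l ∈ y, l.IsMarker) : y = [] := by
  by_contra hne
  obtain ⟨l, hl⟩ := List.exists_mem_of_ne_nil y hne
  have hvalid := hA _ ⟨f, hf, hx.append (hy.append (hy.append hz))⟩
  have := hvalid.markersNodup l (hm l hl)
  have := List.count_pos_iff.2 hl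
  simp only [List.count_append] at *
  omega

end VA

def IsEdgeWalk : Q → List (Q × Q) → Q → Prop
  | q, [], r => q = r
  | q, e :: E, r => e.1 = q ∧ IsEdgeWalk e.2 E r

lemma isEdgeWalk_append {q r : Q} {E F : List (Q × Q)} :
    IsEdgeWalk q (E ++ F) r ↔ ∃ s, IsEdgeWalk q E s ∧ IsEdgeWalk s F r := by
  induction E generalizing q with
  | nil => simp [IsEdgeWalk]
  | cons e E ih => simp [IsEdgeWalk, ih, and_assoc]

namespace VA

/-- A run of `A` recorded as a list of transitions `((source, target), label)`. -/
def IsRun (A : VA α V Q) (q : Q) (T : List ((Q × Q) × Label α V)) (r : Q) : Prop :=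
  IsEdgeWalk q (T.map Prod.fst) r ∧ ∀ p ∈ T, A.trans p.1.1 p.2 p.1.2

variable {A : VA α V Q}

lemma isRun_nil {q r : Q} : A.IsRun q [] r ↔ q = r := by
  simp [IsRun, IsEdgeWalk]

lemma isRun_cons {q r : Q} {p : (Q × Q) × Label α V} {T : List ((Q × Q) × Label α V)} :
    A.IsRun q (p :: T) r ↔ p.1.1 = q ∧ A.trans p.1.1 p.2 p.1.2 ∧ A.IsRun p.1.2 T r := by
  simp only [IsRun, List.map_cons, IsEdgeWalk, List.forall_mem_cons]
  tauto

lemma isRun_append {q r : Q} {T T' : List ((Q × Q) × Label α V)} :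
    A.IsRun q (T ++ T') r ↔ ∃ s, A.IsRun q T s ∧ A.IsRun s T' r := by
  simp only [IsRun, List.map_append, isEdgeWalk_append, List.forall_mem_append]
  constructor
  · rintro ⟨⟨s, hT, hT'⟩, h, h'⟩
    exact ⟨s, ⟨hT, h⟩, hT', h'⟩
  · rintro ⟨s, ⟨hT, h⟩, hT', h'⟩
    exact ⟨⟨s, hT, hT'⟩, h, h'⟩

lemma path_iff_exists_isRun {q r : Q} {w : List (Label α V)} :
    A.Path q w r ↔ ∃ T, A.IsRun q T r ∧ T.map Prod.snd = w := by
  induction w generalizing q with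
  | nil => simp [path_nil_iff, isRun_nil]
  | cons l w ih =>
    rw [path_cons_iff]
    constructor
    · rintro ⟨s, ht, hp⟩
      obtain ⟨T, hT, rfl⟩ := ih.1 hp
      exact ⟨((q, s), l) :: T, isRun_cons.2 ⟨rfl, ht, hT⟩, rfl⟩
    · rintro ⟨_ | ⟨⟨⟨q', s⟩, l'⟩, T⟩, hT, hw⟩
      · cases hw
      · obtain ⟨rfl, rfl⟩ := List.cons.inj hw
        obtain ⟨rfl, ht, hT⟩ := isRun_cons.1 hT
        exact ⟨s, ht, ih.2 ⟨T, hT, rfl⟩⟩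

lemma IsRun.path {q r : Q} {T : List ((Q × Q) × Label α V)} (h : A.IsRun q T r) :
    A.Path q (T.map Prod.snd) r :=
  path_iff_exists_isRun.2 ⟨T, h, rfl⟩

lemma Sequential.nodup_edges [DecidableEq α] [DecidableEq V] (hA : A.Sequential)
    {x z : List (Label α V)} {T : List ((Q × Q) × Label α V)} {q r f : Q}
    (hx : A.Path A.init x q) (hT : A.IsRun q T r) (hz : A.Path r z f) (hf : f ∈ A.final)
    (hm : ∀ p ∈ T, p.2.IsMarker) : (T.map Prod.fst).Nodup := by
  refine List.Nodup.of_map Prod.fst ?_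
  induction T generalizing q x with
  | nil => simp
  | cons p T ih =>
    obtain ⟨rfl, ht, hT⟩ := isRun_cons.1 hT
    simp only [List.forall_mem_cons] at hm
    refine List.nodup_cons.2 ⟨fun hmem => ?_,
      ih (hx.append (.cons ht (.nil _))) hT hm.2⟩
    obtain ⟨p', hp', hsrc⟩ : ∃ p' ∈ T, p'.1.1 = p.1.1 := by simpa using hmem
    obtain ⟨T₁, T₂, rfl⟩ := List.append_of_mem hp'
    obtain ⟨s, hT₁, hT₂⟩ := isRun_append.1 hT
    obtain rfl : p'.1.1 = s := (isRun_cons.1 hT₂).1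
    have hloop : A.IsRun p.1.1 (p :: T₁) p.1.1 := isRun_cons.2 ⟨rfl, ht, hsrc ▸ hT₁⟩
    have := hA.eq_nil_of_loop hx hloop.path (hsrc ▸ hT₂.path.append hz) hf (by
      simp only [List.map_cons, List.forall_mem_cons, List.forall_mem_map]
      exact ⟨hm.1, fun p hp => hm.2 p (List.mem_append_left _ hp)⟩)
    simp at this

end VA

def IsTrailEdges (S : Finset (Q × Q)) (q r : Q) : Prop :=
  ∃ E : List (Q × Q), (E : Multiset (Q × Q)) = S.val ∧ IsEdgeWalk q E r

/-- A state `(q₁, q₂, S)` records the state `q₂` in which `A₂` entered the current block of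
markers and the edges `S` of the transitions of `A₂` guessed for the markers of the block read so
far, a new edge for each marker. `A₂` may read the block in another order, so at the next letter
`S` must form a trail from `q₂`. -/
def interVA (A₁ : VA α V Q₁) (A₂ : VA α V Q₂) : VA α V (Q₁ × Q₂ × Finset (Q₂ × Q₂)) where
  init := (A₁.init, A₂.init, ∅)
  final := {s | s.1 ∈ A₁.final ∧ ∃ r ∈ A₂.final, IsTrailEdges s.2.2 s.2.1 r}
  trans s l t := A₁.trans s.1 l t.1 ∧
    match l with
    | letter a => (∃ r, IsTrailEdges s.2.2 s.2.1 r ∧ A₂.trans r (letter a) t.2.1) ∧ t.2.2 = ∅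
    | _ => t.2.1 = s.2.1 ∧ ∃ e, A₂.trans e.1 l e.2 ∧ t.2.2.val = e ::ₘ s.2.2.val

section Product

variable {A₁ : VA α V Q₁} {A₂ : VA α V Q₂}

lemma interVA_trans_of_isMarker {s t : Q₁ × Q₂ × Finset (Q₂ × Q₂)} {l : Label α V}
    (hl : l.IsMarker) :
    (interVA A₁ A₂).trans s l t ↔ A₁.trans s.1 l t.1 ∧ t.2.1 = s.2.1 ∧
      ∃ e, A₂.trans e.1 l e.2 ∧ t.2.2.val = e ::ₘ s.2.2.val := by
  cases l
  exacts [absurd hl id, Iff.rfl, Iff.rfl]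

lemma VA.Path.interVA_fst {s t : Q₁ × Q₂ × Finset (Q₂ × Q₂)} {w : List (Label α V)}
    (h : (interVA A₁ A₂).Path s w t) : A₁.Path s.1 w t.1 := by
  induction h with
  | nil => exact .nil _
  | cons ht _ ih => exact .cons ht.1 ih

lemma interVA_sequential [DecidableEq α] [DecidableEq V] (hA₁ : A₁.Sequential) :
    (interVA A₁ A₂).Sequential :=
  fun w ⟨t, ht, hp⟩ => hA₁ w ⟨t.1, ht.1, hp.interVA_fst⟩

lemma exists_labelling_of_interVA_path {s t : Q₁ × Q₂ × Finset (Q₂ × Q₂)} {m : List (Label α V)}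
    (h : (interVA A₁ A₂).Path s m t) (hm : ∀ l ∈ m, l.IsMarker)
    {M : Multiset ((Q₂ × Q₂) × Label α V)} (hM : M.map Prod.fst = s.2.2.val)
    (hMtrans : ∀ p ∈ M, A₂.trans p.1.1 p.2 p.1.2) :
    t.2.1 = s.2.1 ∧ ∃ M' : Multiset ((Q₂ × Q₂) × Label α V), M'.map Prod.fst = t.2.2.val ∧
      M'.map Prod.snd = ↑m + M.map Prod.snd ∧ ∀ p ∈ M', A₂.trans p.1.1 p.2 p.1.2 := by
  induction h generalizing M with
  | nil => exact ⟨rfl, M, hM, by simp, hMtrans⟩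
  | @cons s s' t l m ht _ ih =>
    simp only [List.forall_mem_cons] at hm
    obtain ⟨-, hq, e, he, hS⟩ := (interVA_trans_of_isMarker hm.1).1 ht
    obtain ⟨hq', M', hM'fst, hM'snd, hM'trans⟩ := ih hm.2 (M := (e, l) ::ₘ M)
      (by rw [hS, Multiset.map_cons, hM]) fun p hp => by
        rcases Multiset.mem_cons.1 hp with rfl | hp
        exacts [he, hMtrans p hp]
    refine ⟨hq'.trans hq, M', hM'fst, ?_, hM'trans⟩
    rw [hM'snd, Multiset.map_cons, ← Multiset.cons_coe, Multiset.add_cons, Multiset.cons_add]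

lemma exists_perm_path_of_interVA_path {q₁ : Q₁} {q₂ r : Q₂} {m : List (Label α V)}
    {s : Q₁ × Q₂ × Finset (Q₂ × Q₂)} (h : (interVA A₁ A₂).Path (q₁, q₂, ∅) m s)
    (hm : ∀ l ∈ m, l.IsMarker) (hr : IsTrailEdges s.2.2 s.2.1 r) :
    ∃ v, m.Perm v ∧ A₂.Path q₂ v r := by
  obtain ⟨hq, M, hMfst, hMsnd, hMtrans⟩ :=
    exists_labelling_of_interVA_path h hm (M := 0) (by simp) (by simp)
  obtain ⟨E, hE, hwalk⟩ := hr
  obtain ⟨T, rfl, hTE⟩ := Multiset.exists_list_of_map_eq_coe (hMfst.trans hE.symm)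
  refine ⟨T.map Prod.snd, Multiset.coe_eq_coe.1 (by simpa using hMsnd.symm), ?_⟩
  rw [hq] at hwalk
  exact VA.IsRun.path ⟨hTE ▸ hwalk, hMtrans⟩

lemma exists_blockPerm_of_interVA_path (w : List (Label α V)) {q₁ : Q₁} {q₂ : Q₂}
    {t : Q₁ × Q₂ × Finset (Q₂ × Q₂)} (h : (interVA A₁ A₂).Path (q₁, q₂, ∅) w t)
    (ht : t ∈ (interVA A₁ A₂).final) :
    ∃ w₂ f, BlockPerm w w₂ ∧ A₂.Path q₂ w₂ f ∧ f ∈ A₂.final := by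
  induction w using induction_on_blocks generalizing q₁ q₂ with
  | markers m hm =>
    obtain ⟨-, r, hr, htr⟩ := ht
    obtain ⟨v, hv, hp⟩ := exists_perm_path_of_interVA_path h hm htr
    exact ⟨v, r, .markers hm hv, hp, hr⟩
  | letter m a u hm ih =>
    obtain ⟨s, hs, hrest⟩ := VA.path_append_iff.1 h
    obtain ⟨⟨s₁, r', S'⟩, ⟨-, ⟨r, hr, hra⟩, rfl⟩, hu⟩ := VA.path_cons_iff.1 hrest
    obtain ⟨v, hv, hp⟩ := exists_perm_path_of_interVA_path hs hm hr
    obtain ⟨w₂, f, hbp, hp₂, hf⟩ := ih hu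
    exact ⟨v ++ letter a :: w₂, f, .letter a hm hv hbp, hp.append (.cons hra hp₂), hf⟩

lemma interVA_path_of_perm {q₂ : Q₂} {m : List (Label α V)} {q₁ s₁ : Q₁}
    {M : Multiset ((Q₂ × Q₂) × Label α V)} {S : Finset (Q₂ × Q₂)} (h : A₁.Path q₁ m s₁)
    (hm : ∀ l ∈ m, l.IsMarker) (hMsnd : M.map Prod.snd = m)
    (hMtrans : ∀ p ∈ M, A₂.trans p.1.1 p.2 p.1.2) (hnodup : (M.map Prod.fst + S.val).Nodup) :
    ∃ S' : Finset (Q₂ × Q₂), S'.val = M.map Prod.fst + S.val ∧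
      (interVA A₁ A₂).Path (q₁, q₂, S) m (s₁, q₂, S') := by
  classical
  induction m generalizing q₁ M S with
  | nil =>
    obtain rfl := VA.path_nil_iff.1 h
    obtain rfl : M = 0 := Multiset.map_eq_zero.1 hMsnd
    exact ⟨S, by simp, .nil _⟩
  | cons l m ih =>
    simp only [List.forall_mem_cons] at hm
    obtain ⟨q₁', ht, hp⟩ := VA.path_cons_iff.1 h
    obtain ⟨p, hpM, rfl⟩ : ∃ p ∈ M, p.2 = l :=
      Multiset.mem_map.1 (hMsnd ▸ Multiset.mem_coe.2 (List.mem_cons_self ..))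
    have hM := Multiset.cons_erase hpM
    rw [← hM, Multiset.map_cons, ← Multiset.cons_coe] at hMsnd
    have hsplit : M.map Prod.fst + S.val = (M.erase p).map Prod.fst + (p.1 ::ₘ S.val) := by
      rw [Multiset.add_cons, ← Multiset.cons_add, ← Multiset.map_cons Prod.fst, hM]
    rw [hsplit] at hnodup
    have hpS : p.1 ∉ S := fun hpS =>
      (Multiset.nodup_cons.1 (Multiset.add_cons .. ▸ hnodup)).1 (Multiset.mem_add.2 (.inr hpS))
    obtain ⟨S', hS', hpath⟩ := ih hp hm.2 (Multiset.cons_inj_right _ |>.1 hMsnd)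
      (fun p' hp' => hMtrans p' (Multiset.mem_of_mem_erase hp')) (S := Finset.cons p.1 S hpS)
      hnodup
    refine ⟨S', hS'.trans hsplit.symm, .cons ?_ hpath⟩
    exact (interVA_trans_of_isMarker hm.1).2 ⟨ht, rfl, p.1, hMtrans p hpM, Finset.cons_val hpS⟩

lemma exists_interVA_path_of_block [DecidableEq α] [DecidableEq V] (hA₂ : A₂.Sequential)
    {x v z m : List (Label α V)} {q₁ s₁ : Q₁} {q₂ r f : Q₂} (hx : A₂.Path A₂.init x q₂)
    (hv : A₂.Path q₂ v r) (hz : A₂.Path r z f) (hf : f ∈ A₂.final) (hm : ∀ l ∈ m, l.IsMarker)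
    (hperm : m.Perm v) (h₁ : A₁.Path q₁ m s₁) :
    ∃ S, IsTrailEdges S q₂ r ∧ (interVA A₁ A₂).Path (q₁, q₂, ∅) m (s₁, q₂, S) := by
  obtain ⟨T, hT, rfl⟩ := VA.path_iff_exists_isRun.1 hv
  have hnodup := hA₂.nodup_edges hx hT hz hf
    fun p hp => hm _ (hperm.mem_iff.2 (List.mem_map_of_mem hp))
  obtain ⟨S, hS, hpath⟩ := interVA_path_of_perm h₁ hm
    (M := (T : Multiset ((Q₂ × Q₂) × Label α V))) (S := ∅)
    (by rw [Multiset.map_coe, Multiset.coe_eq_coe]; exact hperm.symm) hT.2 (by simpa using hnodup)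
  exact ⟨S, ⟨T.map Prod.fst, by simpa using hS.symm, hT.1⟩, hpath⟩

lemma exists_interVA_accepting_of_blockPerm [DecidableEq α] [DecidableEq V] (hA₂ : A₂.Sequential)
    {w w₂ : List (Label α V)} (h : BlockPerm w w₂) {x : List (Label α V)} {q₁ f₁ : Q₁}
    {q₂ f₂ : Q₂} (hx : A₂.Path A₂.init x q₂) (h₁ : A₁.Path q₁ w f₁) (hf₁ : f₁ ∈ A₁.final)
    (h₂ : A₂.Path q₂ w₂ f₂) (hf₂ : f₂ ∈ A₂.final) :
    ∃ t, (interVA A₁ A₂).Path (q₁, q₂, ∅) w t ∧ t ∈ (interVA A₁ A₂).final := by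
  induction h generalizing x q₁ q₂ with
  | markers hm hperm =>
    obtain ⟨S, hS, hp⟩ := exists_interVA_path_of_block hA₂ hx h₂ (.nil f₂) hf₂ hm hperm h₁
    exact ⟨_, hp, hf₁, f₂, hf₂, hS⟩
  | letter a hm hperm _ ih =>
    obtain ⟨s₁, hm₁, hrest₁⟩ := VA.path_append_iff.1 h₁
    obtain ⟨s₁', ha₁, hu₁⟩ := VA.path_cons_iff.1 hrest₁
    obtain ⟨r, hm₂, hrest₂⟩ := VA.path_append_iff.1 h₂
    obtain ⟨r', ha₂, hu₂⟩ := VA.path_cons_iff.1 hrest₂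
    obtain ⟨S, hS, hp⟩ := exists_interVA_path_of_block hA₂ hx hm₂ hrest₂ hf₂ hm hperm hm₁
    obtain ⟨t, hpt, ht⟩ := ih (hx.append (hm₂.append (.cons ha₂ (.nil _)))) hu₁ hu₂
    exact ⟨t, hp.append (.cons ⟨ha₁, ⟨r, hS, ha₂⟩, rfl⟩ hpt), ht⟩

theorem interVA_spanner [DecidableEq α] [DecidableEq V] (hA₁ : A₁.Sequential)
    (hA₂ : A₂.Sequential) : (interVA A₁ A₂).spanner = fun d => A₁.spanner d ∩ A₂.spanner d := by
  funext d
  ext μ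
  constructor
  · rintro ⟨w, ⟨t, ht, hp⟩, rfl, rfl⟩
    obtain ⟨w₂, f, hbp, hp₂, hf⟩ := exists_blockPerm_of_interVA_path w hp ht
    exact ⟨⟨w, ⟨t.1, ht.1, hp.interVA_fst⟩, rfl, rfl⟩,
      ⟨w₂, ⟨f, hf, hp₂⟩, hbp.letters_eq.symm, hbp.refMapping_eq.symm⟩⟩
  · rintro ⟨⟨w, ⟨f₁, hf₁, hp₁⟩, rfl, rfl⟩, ⟨w₂, ⟨f₂, hf₂, hp₂⟩, hlet, hmap⟩⟩
    have hbp := blockPerm_of_refMapping_eq (hA₁ w ⟨f₁, hf₁, hp₁⟩) (hA₂ w₂ ⟨f₂, hf₂, hp₂⟩)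
      hlet.symm hmap.symm
    obtain ⟨t, hp, ht⟩ := exists_interVA_accepting_of_blockPerm hA₂ hbp (.nil _) hp₁ hf₁ hp₂ hf₂
    exact ⟨w, ⟨t, ht, hp⟩, rfl, rfl⟩

end Product

end Intersection

theorem regular_closed_under_intersection_general {α V : Type} [DecidableEq α]
    [DecidableEq V] (P1 P2 : Spanner α V) (h1 : IsRegular P1) (h2 : IsRegular P2) :
    IsRegular (fun d => P1 d ∩ P2 d) := by
  obtain ⟨Q₁, _, A₁, hA₁, rfl⟩ := h1
  obtain ⟨Q₂, _, A₂, hA₂, rfl⟩ := h2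
  exact ⟨_, inferInstance, interVA A₁ A₂, interVA_sequential hA₁, interVA_spanner hA₁ hA₂⟩

/-- Regular spanners are closed under intersection. -/
theorem regular_closed_under_intersection {α V : Type} [Fintype α] [DecidableEq α]
    [DecidableEq V] (P1 P2 : Spanner α V) (h1 : IsRegular P1) (h2 : IsRegular P2) :
    IsRegular (fun d => P1 d ∩ P2 d) :=
  regular_closed_under_intersection_general P1 P2 h1 h2

end DocSpanners
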